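/- Let T0, D0, T1, D1, ..., Tn be a string of bowties in a matroid M, where Ti = {a_i, b_i, c_i} is a triangle for each i and Dj = {b_j, c_j, a_{j+1}, b_{j+1}} is a cocircuit for each j < n. Then for all k in {1, 2, ..., n}, the matroid M\c0,c1,...,cn/bn is isomorphic to M\c0,c1,...,c_{k-1}/b_k\a_k,a_{k+1},...,a_n, which is isomorphic to M\c0,c1,...,c_{k-1}/b_{k-1}\a_k,a_{k+1},...,a_n, which in turn is isomorphic to M\a0,a1,...,an/b0. -/

import Mathlib

/-!
In `M ＼ {c₀, …, c_{j-1}, a_{j+1}, …, aₙ} ／ bⱼ` the triangle `Tⱼ` has become a parallel pair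
`{aⱼ, cⱼ}`, and in `M ＼ {c₀, …, c_{j-1}, aⱼ, …, aₙ}` the cocircuit `D_{j-1}` has become a series
pair `{b_{j-1}, bⱼ}`: by orthogonality with the remaining triangles, neither `b_{j-1}` nor `bⱼ` is
a coloop there. Swapping the two elements of a parallel pair is an isomorphism between the two
single-element deletions, and dually for series pairs and contractions. Alternating the two swaps
moves from `M ＼ {c₀, …, cₙ} ／ bₙ` one index at a time down to `M ＼ {a₀, …, aₙ} ／ b₀`, passing
through the minors of the statement.
-/

open Set

namespace MatroidSplitter

variable {α β : Type*}

/-- A circuit of a matroid: a minimal dependent set. -/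
def IsCircuit (M : Matroid α) (C : Set α) : Prop :=
  M.Dep C ∧ ∀ D, D ⊂ C → ¬ M.Dep D

/-- A cocircuit: a circuit of the dual matroid. -/
def IsCocircuit (M : Matroid α) (C : Set α) : Prop := IsCircuit M✶ C

/-- A triangle: a 3-element circuit. -/
def IsTriangle (M : Matroid α) (T : Set α) : Prop := IsCircuit M T ∧ T.encard = 3

/-- A triad: a 3-element cocircuit. -/
def IsTriad (M : Matroid α) (T : Set α) : Prop := IsCocircuit M T ∧ T.encard = 3

/-- Deletion of a set of elements. -/
def del (M : Matroid α) (D : Set α) : Matroid α := M.restrict (M.E \ D)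

/-- Contraction of a set of elements. -/
def con (M : Matroid α) (C : Set α) : Matroid α := (del M✶ C)✶

/-- The extended rank of a set: supremum of cardinalities of independent subsets. -/
noncomputable def eRk (M : Matroid α) (X : Set α) : ℕ∞ :=
  ⨆ I : {I : Set α // M.Indep I ∧ I ⊆ X}, (I : Set α).encard

/-- The extended rank of a matroid. -/
noncomputable def eRank (M : Matroid α) : ℕ∞ := eRk M M.E

/-- `(X, E - X)` is a `k`-separation of `M`:  both sides have at least `k` elements and
`r(X) + r(E - X) ≤ r(M) + k - 1`. -/
def IsKSeparation (M : Matroid α) (k : ℕ) (X : Set α) : Prop :=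
  X ⊆ M.E ∧ (k : ℕ∞) ≤ X.encard ∧ (k : ℕ∞) ≤ (M.E \ X).encard ∧
    eRk M X + eRk M (M.E \ X) ≤ eRank M + (k - 1 : ℕ)

/-- A matroid is `3`-connected if it has no `k`-separation for `k < 3`. -/
def ThreeConnected (M : Matroid α) : Prop :=
  ∀ k : ℕ, k < 3 → ∀ X : Set α, ¬ IsKSeparation M k X

/-- A matroid is internally 4-connected if it is 3-connected and one side of every
3-separation has exactly three elements. -/
def InternallyFourConnected (M : Matroid α) : Prop :=
  ThreeConnected M ∧ ∀ X : Set α, IsKSeparation M 3 X →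
    X.encard = 3 ∨ (M.E \ X).encard = 3

/-- A 4-fan `(x₁,x₂,x₃,x₄)`: four distinct elements with `{x₁,x₂,x₃}` a triangle
and `{x₂,x₃,x₄}` a triad. -/
def IsFan4 (M : Matroid α) (x₁ x₂ x₃ x₄ : α) : Prop :=
  ({x₁, x₂, x₃, x₄} : Set α).encard = 4 ∧
    IsTriangle M {x₁, x₂, x₃} ∧ IsTriad M {x₂, x₃, x₄}

/-- A matroid is `(4,4,S)`-connected if it is 3-connected and one side of every
3-separation is a triangle, a triad, or a 4-element fan. -/
def FourFourSConnected (M : Matroid α) : Prop :=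
  ThreeConnected M ∧ ∀ X : Set α, IsKSeparation M 3 X →
    ∃ Z ∈ ({X, M.E \ X} : Set (Set α)),
      IsTriangle M Z ∨ IsTriad M Z ∨
        ∃ x₁ x₂ x₃ x₄, Z = {x₁, x₂, x₃, x₄} ∧ IsFan4 M x₁ x₂ x₃ x₄

/-- A set is fully closed if it is closed in the matroid and in its dual. -/
def FullyClosed (M : Matroid α) (X : Set α) : Prop :=
  M.closure X ⊆ X ∧ M✶.closure X ⊆ X

/-- The full closure of a set: the smallest fully closed set containing it. -/
def fcl (M : Matroid α) (X : Set α) : Set α :=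
  ⋂₀ {Y | X ∩ M.E ⊆ Y ∧ FullyClosed M Y}

/-- A matroid is sequentially 4-connected if it is 3-connected and every
3-separation has a side whose full closure is the ground set. -/
def SequentiallyFourConnected (M : Matroid α) : Prop :=
  ThreeConnected M ∧ ∀ X : Set α, IsKSeparation M 3 X →
    fcl M X = M.E ∨ fcl M (M.E \ X) = M.E

/-- A binary matroid: every circuit and cocircuit intersect in an even number
of elements. -/
def Binary (M : Matroid α) : Prop :=
  ∀ C K : Set α, IsCircuit M C → IsCocircuit M K → ∃ m : ℕ, (C ∩ K).encard = 2 * m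

/-- An isomorphism between matroids via the map `f`. -/
def IsoMWith (M : Matroid α) (N : Matroid β) (f : α → β) : Prop :=
  Set.BijOn f M.E N.E ∧ ∀ I ⊆ M.E, (M.Indep I ↔ N.Indep (f '' I))

/-- Two matroids are isomorphic. -/
def IsoM (M : Matroid α) (N : Matroid β) : Prop := ∃ f : α → β, IsoMWith M N f

/-- `M` has a minor isomorphic to `N`. -/
def HasMinorIso (M : Matroid α) (N : Matroid β) : Prop :=
  ∃ C D : Set α, IsoM (del (con M C) D) N

/-- A string of bowties `T₀, D₀, T₁, D₁, …, Tₙ` in `M`: triangles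
`Tᵢ = {aᵢ, bᵢ, cᵢ}` and cocircuits `Dⱼ = {bⱼ, cⱼ, aⱼ₊₁, bⱼ₊₁}`, with all elements
distinct except that `a₀` may equal `cₙ`. -/
def BowtieString (M : Matroid α) (n : ℕ) (a b c : ℕ → α) : Prop :=
  1 ≤ n ∧
  (∀ i ≤ n, IsTriangle M {a i, b i, c i}) ∧
  (∀ j < n, IsCocircuit M {b j, c j, a (j+1), b (j+1)}) ∧
  (∀ i ≤ n, ∀ j ≤ n,
    (i ≠ j → a i ≠ a j ∧ b i ≠ b j ∧ c i ≠ c j) ∧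
    a i ≠ b j ∧ b i ≠ c j ∧ (a i ≠ c j ∨ (i = 0 ∧ j = n)))

/-- A ring of bowties: a string of bowties with `n ≥ 2` that wraps around, with all
elements distinct. -/
def BowtieRing (M : Matroid α) (n : ℕ) (a b c : ℕ → α) : Prop :=
  2 ≤ n ∧
  (∀ i ≤ n, IsTriangle M {a i, b i, c i}) ∧
  (∀ j < n, IsCocircuit M {b j, c j, a (j+1), b (j+1)}) ∧
  IsCocircuit M {b n, c n, a 0, b 0} ∧
  (∀ i ≤ n, ∀ j ≤ n,
    (i ≠ j → a i ≠ a j ∧ b i ≠ b j ∧ c i ≠ c j) ∧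
    a i ≠ b j ∧ b i ≠ c j ∧ a i ≠ c j)

end MatroidSplitter

namespace MatroidSplitter

/-- A quasi rotor with central triangle `{x₄,x₅,x₆}` and central element `x₅`. -/
def QuasiRotor {α : Type*} (M : Matroid α) (x₁ x₂ x₃ x₄ x₅ x₆ x₇ x₈ x₉ : α) : Prop :=
  ({x₁, x₂, x₃, x₄, x₅, x₆, x₇, x₈, x₉} : Set α).encard = 9 ∧
  IsTriangle M {x₁, x₂, x₃} ∧ IsTriangle M {x₄, x₅, x₆} ∧ IsTriangle M {x₇, x₈, x₉} ∧
  IsCocircuit M {x₂, x₃, x₄, x₅} ∧ IsCocircuit M {x₅, x₆, x₇, x₈} ∧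
  IsTriangle M {x₃, x₅, x₇}

end MatroidSplitter

namespace MatroidSplitter

open Matroid Set

variable {α β γ : Type*} {M : Matroid α} {C I K X : Set α} {y z : α}

lemma isCircuit_iff_isCircuit : IsCircuit M C ↔ M.IsCircuit C := by
  rw [isCircuit_def, minimal_iff_forall_ssubset, IsCircuit]

lemma del_eq_delete (M : Matroid α) (D : Set α) : del M D = M ＼ D := rfl

lemma con_eq_contract (M : Matroid α) (C : Set α) : con M C = M ／ C := rfl

lemma IsoM.refl (M : Matroid α) : IsoM M M :=
  ⟨id, bijOn_id _, by simp⟩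

lemma IsoMWith.trans {N : Matroid β} {P : Matroid γ} {f : α → β} {g : β → γ}
    (h₁ : IsoMWith M N f) (h₂ : IsoMWith N P g) : IsoMWith M P (g ∘ f) := by
  refine ⟨h₂.1.comp h₁.1, fun I hI ↦ ?_⟩
  rw [h₁.2 I hI, h₂.2 _ ((image_mono hI).trans h₁.1.image_eq.subset), image_comp]

lemma IsoM.trans {N : Matroid β} {P : Matroid γ} (h₁ : IsoM M N) (h₂ : IsoM N P) : IsoM M P :=
  let ⟨_, hf⟩ := h₁
  let ⟨_, hg⟩ := h₂
  ⟨_, hf.trans hg⟩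

lemma isoM_mapEquiv (M : Matroid α) (f : α ≃ β) : IsoM M (M.mapEquiv f) :=
  ⟨f, f.injective.injOn.bijOn_image, fun I _ ↦ by rw [mapEquiv_indep_iff, f.symm_image_image]⟩

lemma indep_image_swap [DecidableEq α] (hC : M.IsCircuit {y, z}) (hI : M.Indep I) (hzI : z ∉ I) :
    M.Indep (Equiv.swap y z '' I) := by
  by_cases hyI : y ∈ I
  · have hyz : y ≠ z := ne_of_mem_of_not_mem hyI hzI
    rw [Equiv.image_swap_of_mem_of_notMem hyI hzI, ← insert_sdiff_singleton_comm hyz.symm]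
    have hyz_cl : y ∈ M.closure {z} := by
      simpa [pair_sdiff_left hyz] using hC.mem_closure_sdiff_singleton_of_mem (e := y) (by simp)
    have hz_cl : z ∉ M.closure (I \ {y}) := fun hz ↦ hI.notMem_closure_sdiff_of_mem hyI <|
      M.closure_subset_closure_of_subset_closure (singleton_subset_iff.2 hz) hyz_cl
    rw [(hI.sdiff _).insert_indep_iff_of_notMem (fun h ↦ hzI h.1)]
    exact ⟨hC.subset_ground (by simp), hz_cl⟩
  · rwa [image_congr (fun x hx ↦ Equiv.swap_apply_of_ne_of_ne (ne_of_mem_of_not_mem hx hyI)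
      (ne_of_mem_of_not_mem hx hzI)), image_id']

lemma indep_image_swap_iff [DecidableEq α] (hC : M.IsCircuit {y, z}) (hzI : z ∉ I) :
    M.Indep (Equiv.swap y z '' I) ↔ M.Indep I := by
  refine ⟨fun h ↦ ?_, fun h ↦ indep_image_swap hC h hzI⟩
  have hyI : y ∉ Equiv.swap y z '' I := by
    rintro ⟨x, hx, hxy⟩
    rw [Equiv.swap_apply_eq_iff, Equiv.swap_apply_left] at hxy
    exact hzI (hxy ▸ hx)
  have h' := indep_image_swap (pair_comm y z ▸ hC) h hyI
  rwa [Equiv.swap_comm z y, image_image, image_congr (fun x _ ↦ Equiv.swap_apply_self ..),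
    image_id'] at h'

lemma mapEquiv_swap_delete_eq [DecidableEq α] (hC : M.IsCircuit {y, z}) :
    (M ＼ {y}).mapEquiv (Equiv.swap y z) = M ＼ {z} := by
  have hE : Equiv.swap y z '' (M.E \ {y}) = M.E \ {z} := by
    have := hC.subset_ground
    ext x
    simp only [Equiv.image_eq_preimage_symm, Equiv.symm_swap, mem_preimage, mem_sdiff,
      mem_singleton_iff, Equiv.swap_apply_def]
    grind
  refine ext_indep hE fun I hI ↦ ?_
  rw [mapEquiv_ground_eq, delete_ground, hE] at hI
  have hzI : z ∉ I := fun h ↦ (hI h).2 rfl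
  rw [mapEquiv_indep_iff, Equiv.symm_swap, deleteElem_indep_iff, deleteElem_indep_iff,
    indep_image_swap_iff hC hzI]
  simp [Equiv.image_eq_preimage_symm, hzI]

lemma isoM_delete_of_isCircuit_pair (hC : M.IsCircuit {y, z}) : IsoM (M ＼ {y}) (M ＼ {z}) := by
  classical
  exact mapEquiv_swap_delete_eq hC ▸ isoM_mapEquiv _ _

lemma isoM_contract_of_isCocircuit_pair (hK : M.IsCocircuit {y, z}) :
    IsoM (M ／ {y}) (M ／ {z}) := by
  classical
  have h := congrArg Matroid.dual (mapEquiv_swap_delete_eq hK.isCircuit)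
  rw [mapEquiv_eq_map, map_dual, ← mapEquiv_eq_map, dual_delete, dual_delete, dual_dual] at h
  exact h ▸ isoM_mapEquiv _ _

lemma isCocircuit_delete_pair_of_notMem_closure (hK : M.IsCocircuit K) (hyK : y ∈ K)
    (hKX : K ⊆ insert y (insert z X)) (hy : y ∈ M.E \ M✶.closure X)
    (hz : z ∈ M.E \ M✶.closure X) : (M ＼ X).IsCocircuit {y, z} := by
  have hnl : ∀ e ∈ ({y, z} : Set α), (M✶ ／ X).IsNonloop e := by
    rintro e (rfl | rfl | rfl) <;> rwa [contract_isNonloop_iff]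
  have hyX : y ∉ X := fun h ↦ hy.2 (M✶.mem_closure_of_mem' h hy.1)
  rw [isCocircuit_def, dual_delete, isCircuit_iff_dep_forall_sdiff_singleton_indep]
  refine ⟨(hK.isCircuit.contract_dep_of_not_subset fun h ↦ hyX (h hyK)).superset ?_
    fun e he ↦ (hnl e he).mem_ground, ?_⟩
  · rintro e ⟨heK, heX⟩
    obtain rfl | rfl | h := hKX heK
    · simp
    · simp
    · exact absurd h heX
  · rintro e (rfl | rfl | rfl)
    · exact (hnl z (by simp)).indep.subset (by simp [subset_def])
    · exact (hnl y (by simp)).indep.subset (by simp [subset_def])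

def bowtieDeletionSet (a c : ℕ → α) (n j : ℕ) : Set α := c '' Iio j ∪ a '' Icc j n

lemma bowtieDeletionSet_add_one (a c : ℕ → α) (n j : ℕ) :
    bowtieDeletionSet a c n (j + 1) = insert (c j) (c '' Iio j ∪ a '' Icc (j + 1) n) := by
  rw [bowtieDeletionSet, Iio_add_one_eq_Iic, ← Iio_insert, image_insert_eq, insert_union]

lemma bowtieDeletionSet_eq_insert (a c : ℕ → α) {n j : ℕ} (hj : j ≤ n) :
    bowtieDeletionSet a c n j = insert (a j) (c '' Iio j ∪ a '' Icc (j + 1) n) := by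
  rw [bowtieDeletionSet, ← insert_Icc_add_one_left_eq_Icc hj, image_insert_eq, union_insert]

namespace BowtieString

variable {n : ℕ} {a b c : ℕ → α} {i j l m : ℕ}

lemma isCircuit (h : BowtieString M n a b c) (hi : i ≤ n) : M.IsCircuit {a i, b i, c i} :=
  isCircuit_iff_isCircuit.1 (h.2.1 i hi).1

lemma isCocircuit (h : BowtieString M n a b c) (hi : i < n) :
    M.IsCocircuit {b i, c i, a (i + 1), b (i + 1)} :=
  isCircuit_iff_isCircuit.1 (h.2.2.1 i hi)

lemma a_inj (h : BowtieString M n a b c) (hi : i ≤ n) (hj : j ≤ n) (hij : a i = a j) : i = j :=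
  by_contra fun hne ↦ ((h.2.2.2 i hi j hj).1 hne).1 hij

lemma b_inj (h : BowtieString M n a b c) (hi : i ≤ n) (hj : j ≤ n) (hij : b i = b j) : i = j :=
  by_contra fun hne ↦ ((h.2.2.2 i hi j hj).1 hne).2.1 hij

lemma c_inj (h : BowtieString M n a b c) (hi : i ≤ n) (hj : j ≤ n) (hij : c i = c j) : i = j :=
  by_contra fun hne ↦ ((h.2.2.2 i hi j hj).1 hne).2.2 hij

lemma a_ne_b (h : BowtieString M n a b c) (hi : i ≤ n) (hj : j ≤ n) : a i ≠ b j :=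
  (h.2.2.2 i hi j hj).2.1

lemma b_ne_c (h : BowtieString M n a b c) (hi : i ≤ n) (hj : j ≤ n) : b i ≠ c j :=
  (h.2.2.2 i hi j hj).2.2.1

lemma a_ne_c (h : BowtieString M n a b c) (hi : i ≤ n) (hj : j ≤ n) (hij : i ≠ 0 ∨ j ≠ n) :
    a i ≠ c j :=
  (h.2.2.2 i hi j hj).2.2.2.resolve_right (by omega)

lemma b_notMem_bowtieDeletionSet (h : BowtieString M n a b c) (hm : m ≤ n) (hj : j ≤ n + 1) :
    b m ∉ bowtieDeletionSet a c n j := by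
  simp only [bowtieDeletionSet, mem_union, mem_image, mem_Iio, mem_Icc, not_or, not_exists,
    not_and]
  exact ⟨fun l hl hlm ↦ h.b_ne_c hm (by omega) hlm.symm,
    fun l hl hlm ↦ h.a_ne_b hl.2 hm hlm⟩

lemma le_of_a_mem_bowtieDeletionSet (h : BowtieString M n a b c) (hm : m ≤ n)
    (hj : j ≤ n + 1) (hmj : m ≠ 0 ∨ j ≤ n) (ha : a m ∈ bowtieDeletionSet a c n j) : j ≤ m := by
  obtain ⟨l, hl, hlm⟩ | ⟨l, hl, hlm⟩ := ha
  · exact absurd hlm.symm (h.a_ne_c hm (by grind) (by grind))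
  · exact h.a_inj hl.2 hm hlm ▸ hl.1

lemma lt_of_c_mem_bowtieDeletionSet (h : BowtieString M n a b c) (hm : m ≤ n)
    (hj : j ≤ n + 1) (hmj : m ≠ n ∨ j ≠ 0) (hc : c m ∈ bowtieDeletionSet a c n j) : m < j := by
  obtain ⟨l, hl, hlm⟩ | ⟨l, hl, hlm⟩ := hc
  · exact h.c_inj (by grind) hm hlm ▸ hl
  · exact absurd hlm (h.a_ne_c hl.2 hm (by grind))

lemma isCircuit_contract_pair (h : BowtieString M n a b c) (hj : j ≤ n) :
    (M ＼ (c '' Iio j ∪ a '' Icc (j + 1) n) ／ {b j}).IsCircuit {c j, a j} := by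
  have hn := h.1
  have hY : Disjoint {a j, b j, c j} (c '' Iio j ∪ a '' Icc (j + 1) n) := by
    refine disjoint_left.2 ?_
    rintro x (rfl | rfl | rfl) hx
    · exact (h.le_of_a_mem_bowtieDeletionSet hj (by omega) (by omega) <|
        bowtieDeletionSet_add_one a c n j ▸ mem_insert_of_mem _ hx).not_gt (by omega)
    · exact h.b_notMem_bowtieDeletionSet hj (by omega) <|
        bowtieDeletionSet_eq_insert a c hj ▸ mem_insert_of_mem _ hx
    · exact (h.lt_of_c_mem_bowtieDeletionSet hj (by omega) (by omega) <|
        bowtieDeletionSet_eq_insert a c hj ▸ mem_insert_of_mem _ hx).false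
  have hT := ((circuit_iff_delete_of_disjoint hY).1 (h.isCircuit hj)).contractElem_isCircuit
    (nontrivial_of_mem_mem_ne (by simp) (by simp) (h.a_ne_b hj hj)) (e := b j) (by simp)
  convert hT using 1
  ext x
  simp only [mem_insert_iff, mem_singleton_iff, mem_sdiff]
  have := h.a_ne_b hj hj
  have := h.b_ne_c hj hj
  grind

lemma isoM_delete_succ (h : BowtieString M n a b c) (hj : j ≤ n) :
    IsoM (M ＼ bowtieDeletionSet a c n (j + 1) ／ {b j})
      (M ＼ bowtieDeletionSet a c n j ／ {b j}) := by
  have hiso := isoM_delete_of_isCircuit_pair (h.isCircuit_contract_pair hj)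
  rwa [contract_delete_comm _ (disjoint_singleton.2 (h.b_ne_c hj hj)),
    contract_delete_comm _ (disjoint_singleton.2 (h.a_ne_b hj hj).symm), delete_delete,
    delete_delete, union_singleton, union_singleton, ← bowtieDeletionSet_add_one,
    ← bowtieDeletionSet_eq_insert a c hj] at hiso

lemma triangle_inter_subsingleton (h : BowtieString M n a b c) (hj : 1 ≤ j) (hjn : j ≤ n)
    (hm : m ≤ n) (hl : l ≤ n) (hml : m ≠ l) :
    ({a m, b m, c m} ∩ insert (b l) (bowtieDeletionSet a c n j)).Subsingleton := by
  have hb : b m ∉ insert (b l) (bowtieDeletionSet a c n j) := by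
    rintro (hbm | hbm)
    · exact hml (h.b_inj hm hl hbm)
    · exact h.b_notMem_bowtieDeletionSet hm (by omega) hbm
  by_cases hmj : m < j
  · refine (subsingleton_singleton (a := c m)).anti ?_
    rintro x ⟨rfl | rfl | rfl, hx⟩
    · obtain hx | hx := hx
      · exact absurd hx (h.a_ne_b hm hl)
      · exact absurd (h.le_of_a_mem_bowtieDeletionSet hm (by omega) (by omega) hx) (by omega)
    · exact absurd hx hb
    · rfl
  · refine (subsingleton_singleton (a := a m)).anti ?_
    rintro x ⟨rfl | rfl | rfl, hx⟩
    · rfl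
    · exact absurd hx hb
    · obtain hx | hx := hx
      · exact absurd hx.symm (h.b_ne_c hl hm)
      · exact absurd (h.lt_of_c_mem_bowtieDeletionSet hm (by omega) (by omega) hx) hmj

lemma subset_triangle_of_isCocircuit (h : BowtieString M n a b c) (hj : 1 ≤ j) (hjn : j ≤ n)
    (hl : l ≤ n) (hK : M.IsCocircuit K) (hKD : K ⊆ insert (b l) (bowtieDeletionSet a c n j)) :
    K ⊆ {a l, b l, c l} := by
  intro x hxK
  obtain ⟨m, hm, hxm⟩ : ∃ m ≤ n, x ∈ ({a m, b m, c m} : Set α) := by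
    obtain rfl | ⟨m, hm, rfl⟩ | ⟨m, hm, rfl⟩ := hKD hxK
    exacts [⟨l, hl, by simp⟩, ⟨m, by grind, by simp⟩, ⟨m, hm.2, by simp⟩]
  obtain rfl | hml := eq_or_ne m l
  · exact hxm
  exact absurd ((h.triangle_inter_subsingleton hj hjn hm hl hml).anti
    (inter_subset_inter_right _ hKD)) ((h.isCircuit hm).isCocircuit_inter_nontrivial hK
      ⟨x, hxm, hxK⟩).not_subsingleton

lemma b_notMem_closure_dual (h : BowtieString M n a b c) (hi : i < n) (hil : i ≤ l)
    (hli : l ≤ i + 1) : b l ∉ M✶.closure (bowtieDeletionSet a c n (i + 1)) := by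
  intro hcl
  have hl : l ≤ n := by omega
  -- A cocircuit witnessing `hcl` lies in `Tₗ` by orthogonality, hence equals `Dᵢ ⊄ Tₗ`.
  obtain ⟨K, hKD, hK, -⟩ := exists_isCircuit_of_mem_closure hcl
    (h.b_notMem_bowtieDeletionSet hl (by omega))
  have hKT := h.subset_triangle_of_isCocircuit (by omega) hi hl hK hKD
  have hKC : K ⊆ {b i, c i, a (i + 1), b (i + 1)} := by
    intro x hxK
    obtain rfl | rfl | rfl := hKT hxK
    · have := h.le_of_a_mem_bowtieDeletionSet hl (by omega) (by omega)
        ((hKD hxK).resolve_left (h.a_ne_b hl hl))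
      obtain rfl : l = i + 1 := by omega
      simp
    · obtain rfl | rfl : l = i ∨ l = i + 1 := by omega
      all_goals simp
    · have := h.lt_of_c_mem_bowtieDeletionSet hl (by omega) (by omega)
        ((hKD hxK).resolve_left (h.b_ne_c hl hl).symm)
      obtain rfl : l = i := by omega
      simp
  obtain rfl := hK.eq_of_subset_isCircuit (h.isCocircuit hi) hKC
  have ha : a (i + 1) ∈ ({a l, b l, c l} : Set α) := hKT (by simp)
  have hc : c i ∈ ({a l, b l, c l} : Set α) := hKT (by simp)
  obtain ha | ha | ha := ha
  · obtain hc | hc | hc := hc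
    · exact h.a_ne_c hl (by omega) (by omega) hc.symm
    · exact h.b_ne_c hl (by omega) hc.symm
    · have := h.a_inj (by omega) hl ha
      have := h.c_inj (by omega) hl hc
      omega
  · exact h.a_ne_b (by omega) hl ha
  · exact h.a_ne_c (by omega) hl (by omega) ha

lemma isCocircuit_delete_pair (h : BowtieString M n a b c) (hi : i < n) :
    (M ＼ bowtieDeletionSet a c n (i + 1)).IsCocircuit {b (i + 1), b i} := by
  have hE : ∀ l ≤ n, b l ∈ M.E := fun l hl ↦ (h.isCircuit hl).subset_ground (by simp)
  refine isCocircuit_delete_pair_of_notMem_closure (h.isCocircuit hi) (by simp) ?_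
    ⟨hE _ hi, h.b_notMem_closure_dual hi (by omega) le_rfl⟩
    ⟨hE _ hi.le, h.b_notMem_closure_dual hi le_rfl (by omega)⟩
  rintro x (rfl | rfl | rfl | rfl)
  · simp
  · exact mem_insert_of_mem _ <| mem_insert_of_mem _ <| mem_union_left _ ⟨i, by simp, rfl⟩
  · exact mem_insert_of_mem _ <| mem_insert_of_mem _ <|
      mem_union_right _ ⟨i + 1, by simp; omega, rfl⟩
  · simp

lemma isoM_contract_succ (h : BowtieString M n a b c) (hi : i < n) :
    IsoM (M ＼ bowtieDeletionSet a c n (i + 1) ／ {b (i + 1)})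
      (M ＼ bowtieDeletionSet a c n (i + 1) ／ {b i}) :=
  isoM_contract_of_isCocircuit_pair (h.isCocircuit_delete_pair hi)

lemma isoM_of_le (h : BowtieString M n a b c) (him : i ≤ m) (hm : m ≤ n) :
    IsoM (M ＼ bowtieDeletionSet a c n (m + 1) ／ {b m})
      (M ＼ bowtieDeletionSet a c n (i + 1) ／ {b i}) := by
  induction m, him using Nat.le_induction with
  | base => exact IsoM.refl _
  | succ m _ ih =>
    exact ((h.isoM_delete_succ hm).trans (h.isoM_contract_succ hm)).trans (ih (by omega))

lemma delete_contract_delete_eq (h : BowtieString M n a b c) (hl : l ≤ n) :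
    M ＼ c '' Iio j ／ {b l} ＼ a '' Icc j n = M ＼ bowtieDeletionSet a c n j ／ {b l} := by
  have hb : Disjoint {b l} (a '' Icc j n) :=
    disjoint_singleton_left.2 fun ⟨m, hm, hbm⟩ ↦ h.a_ne_b hm.2 hl hbm
  rw [contract_delete_comm _ hb, delete_delete, bowtieDeletionSet]

end BowtieString

lemma bowtieDeletionSet_zero (a c : ℕ → α) (n : ℕ) : bowtieDeletionSet a c n 0 = a '' Iic n := by
  simp [bowtieDeletionSet, ← Ici_inter_Iic]

lemma bowtieDeletionSet_add_one_self (a c : ℕ → α) (n : ℕ) :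
    bowtieDeletionSet a c n (n + 1) = c '' Iic n := by
  simp [bowtieDeletionSet, Iio_add_one_eq_Iic]

end MatroidSplitter

open MatroidSplitter in
/-- isomorphisms obtained from a string of bowties by trimming. -/
theorem statement_3 {α : Type*} (M : Matroid α) (n : ℕ) (a b c : ℕ → α)
    (h : BowtieString M n a b c) :
    ∀ k, 1 ≤ k → k ≤ n →
      IsoM (con (del M (c '' Set.Iic n)) {b n})
           (del (con (del M (c '' Set.Iio k)) {b k}) (a '' Set.Icc k n)) ∧
      IsoM (del (con (del M (c '' Set.Iio k)) {b k}) (a '' Set.Icc k n))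
           (del (con (del M (c '' Set.Iio k)) {b (k-1)}) (a '' Set.Icc k n)) ∧
      IsoM (del (con (del M (c '' Set.Iio k)) {b (k-1)}) (a '' Set.Icc k n))
           (con (del M (a '' Set.Iic n)) {b 0}) := by
  rintro k hk hkn
  obtain ⟨i, rfl⟩ : ∃ i, k = i + 1 := ⟨k - 1, by omega⟩
  simp only [del_eq_delete, con_eq_contract, add_tsub_cancel_right]
  rw [h.delete_contract_delete_eq hkn, h.delete_contract_delete_eq (by omega),
    ← bowtieDeletionSet_add_one_self, ← bowtieDeletionSet_zero]
  exact ⟨(h.isoM_of_le hkn le_rfl).trans (h.isoM_delete_succ hkn),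
    h.isoM_contract_succ hkn,
    (h.isoM_of_le (Nat.zero_le i) (by omega)).trans (h.isoM_delete_succ n.zero_le)⟩
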